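/- (Implicit duality for a single ground set) Let K_{SP} be a generalized number lattice on S ⊎ P and K_P a generalized number lattice on P. Then (K_{SP} ↔ K_P)^d = K_{SP}^d ↔ K_P^d. In particular if V_{SP} is a vector space, (V_{SP} ↔ K_P)^d = V_{SP}^⊥ ↔ K_P^d. -/

import Mathlib

/-- A generalized number lattice. -/
def IsGenNumLat {M : Type*} [AddCommGroup M] [Module ℚ M] (K : Set M) : Prop :=
  ∃ (n k : ℕ) (b : Fin n → M) (c : Fin k → M),
    K = {x | ∃ (l : Fin n → ℤ) (m : Fin k → ℚ),
      x = (∑ i, (l i : ℚ) • b i) + ∑ j, m j • c j}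

/-- The dual of a collection of vectors on a single index set. -/
def dualLat {X : Type*} [Fintype X] (K : Set (X → ℚ)) : Set (X → ℚ) :=
  {g | ∀ f ∈ K, ∃ z : ℤ, ∑ x, f x * g x = (z : ℚ)}

/-- The dual of a collection of vectors on a disjoint union, represented as pairs. -/
def dualLat2 {A B : Type*} [Fintype A] [Fintype B]
    (K : Set ((A → ℚ) × (B → ℚ))) : Set ((A → ℚ) × (B → ℚ)) :=
  {g | ∀ f ∈ K, ∃ z : ℤ, (∑ a, f.1 a * g.1 a) + ∑ b, f.2 b * g.2 b = (z : ℚ)}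

/-!
In a suitable basis `B` a generalized number lattice is a box: every coordinate is integral, free
or zero. Such a basis is obtained from a basis of the subspace part `W`, a lift of a `ℤ`-basis of
the image of the lattice part in `V ⧸ W` (finitely generated and torsion-free, hence free), and a
completion. In the dual basis the dual of a box is again a box, integral coordinates staying
integral while free and zero ones swap; so duals of generalized number lattices are again such
lattices and `Kᵈᵈ = K`. As the dual of a sum is the intersection of the duals, biduality gives
`(K ∩ L)ᵈ = Kᵈ + Lᵈ`. For `g ∈ (K_SP ↔ K_P)ᵈ`, the vector `(g, 0)` lies in the dual of
`K_SP ∩ (ℚ^S × K_P)`, whose second summand `(ℚ^S × K_P)ᵈ` is `0 × K_Pᵈ`; the decomposition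
`(g, 0) = (g, h) + (0, -h)` then exhibits `(g, h) ∈ K_SPᵈ` with `h ∈ K_Pᵈ`.
-/

open Set Submodule Module
open scoped Pointwise

lemma eq_zero_of_forall_mul_eq_intCast {a : ℚ} (h : ∀ q : ℚ, ∃ z : ℤ, q * a = z) : a = 0 := by
  by_contra ha
  obtain ⟨z, hz⟩ := h (2 * a)⁻¹
  have : ((2 * z : ℤ) : ℚ) = 1 := by push_cast; rw [← hz]; field_simp
  have : 2 * z = 1 := by exact_mod_cast this
  omega

/-- How a coordinate of a generalized number lattice is constrained in an adapted basis. -/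
inductive CoordKind
  | int
  | free
  | zero

namespace CoordKind

def carrier : CoordKind → Set ℚ
  | int => range ((↑) : ℤ → ℚ)
  | free => univ
  | zero => {0}

def dual : CoordKind → CoordKind
  | int => int
  | free => zero
  | zero => free

@[simp] lemma dual_dual (k : CoordKind) : k.dual.dual = k := by
  cases k <;> rfl

lemma zero_mem_carrier (k : CoordKind) : (0 : ℚ) ∈ k.carrier := by
  cases k
  exacts [⟨0, Int.cast_zero⟩, trivial, rfl]

lemma mem_dual_carrier_iff (k : CoordKind) (q : ℚ) :
    q ∈ k.dual.carrier ↔ ∀ a ∈ k.carrier, ∃ z : ℤ, a * q = z := by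
  cases k
  · constructor
    · rintro ⟨w, rfl⟩ _ ⟨z, rfl⟩
      exact ⟨z * w, by push_cast; rfl⟩
    · intro h
      obtain ⟨z, hz⟩ := h 1 ⟨1, Int.cast_one⟩
      exact ⟨z, by rw [← hz, one_mul]⟩
  · simp only [dual, carrier, mem_singleton_iff, mem_univ, true_imp_iff]
    exact ⟨by rintro rfl a; exact ⟨0, by simp⟩, eq_zero_of_forall_mul_eq_intCast⟩
  · simp only [dual, carrier, mem_univ, mem_singleton_iff, forall_eq, zero_mul, true_iff]
    exact ⟨0, Int.cast_zero.symm⟩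

end CoordKind

lemma LinearMap.BilinForm.apply_eq_sum_repr_mul_dualBasis_repr {K V ι : Type*} [Field K]
    [AddCommGroup V] [Module K V] [Fintype ι] [DecidableEq ι] {Φ : LinearMap.BilinForm K V}
    (hΦ : Φ.Nondegenerate) (hsymm : Φ.IsSymm) (B : Basis ι K V) (f g : V) :
    Φ f g = ∑ i, B.repr f i * (Φ.dualBasis hΦ B).repr g i := by
  conv_lhs => rw [← B.sum_repr f]
  simp only [map_sum, map_smul, LinearMap.sum_apply, LinearMap.smul_apply, smul_eq_mul,
    dualBasis_repr_apply, ← hsymm.eq g]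

section DualSet

variable {V : Type*} [AddCommGroup V] [Module ℚ V]

def dualSet (Φ : LinearMap.BilinForm ℚ V) (K : Set V) : Set V :=
  {g | ∀ f ∈ K, ∃ z : ℤ, Φ f g = z}

def coordBox {ι : Type*} (B : Basis ι ℚ V) (κ : ι → CoordKind) : Set V :=
  {x | ∀ i, B.repr x i ∈ (κ i).carrier}

lemma coordBox_reindex {ι ι' : Type*} (B : Basis ι ℚ V) (κ : ι → CoordKind) (e : ι ≃ ι') :
    coordBox (B.reindex e) (κ ∘ e.symm) = coordBox B κ := by
  ext x
  simp [coordBox, e.symm.forall_congr_left]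

variable {ι : Type*} [Fintype ι]

lemma mem_coordBox_iff (B : Basis ι ℚ V) (κ : ι → CoordKind) {x : V} :
    x ∈ coordBox B κ ↔ ∃ a : ι → ℚ, (∀ i, a i ∈ (κ i).carrier) ∧ ∑ i, a i • B i = x :=
  ⟨fun hx => ⟨fun i => B.repr x i, hx, B.sum_repr x⟩,
    by rintro ⟨a, ha, rfl⟩ i; rw [B.repr_sum_self]; exact ha i⟩

variable [DecidableEq ι] {Φ : LinearMap.BilinForm ℚ V}

theorem dualSet_coordBox (hΦ : Φ.Nondegenerate) (hsymm : Φ.IsSymm) (B : Basis ι ℚ V)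
    (κ : ι → CoordKind) :
    dualSet Φ (coordBox B κ) = coordBox (Φ.dualBasis hΦ B) fun i => (κ i).dual := by
  ext g
  simp only [coordBox, dualSet, mem_ofPred_eq, CoordKind.mem_dual_carrier_iff]
  constructor
  · intro hg i a ha
    have hbox : ∀ j, B.repr (a • B i) j ∈ (κ j).carrier := by
      intro j
      rcases eq_or_ne i j with rfl | hij
      · simpa using ha
      · simpa [Finsupp.single_apply, hij] using (κ j).zero_mem_carrier
    obtain ⟨z, hz⟩ := hg _ hbox
    refine ⟨z, ?_⟩
    rw [← hz, LinearMap.BilinForm.apply_eq_sum_repr_mul_dualBasis_repr hΦ hsymm B]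
    simp [Finsupp.single_apply]
  · intro hg f hf
    choose z hz using fun i => hg i _ (hf i)
    refine ⟨∑ i, z i, ?_⟩
    rw [LinearMap.BilinForm.apply_eq_sum_repr_mul_dualBasis_repr hΦ hsymm B, Int.cast_sum]
    exact Finset.sum_congr rfl fun i _ => hz i

theorem dualSet_dualSet_coordBox (hΦ : Φ.Nondegenerate) (hsymm : Φ.IsSymm) (B : Basis ι ℚ V)
    (κ : ι → CoordKind) : dualSet Φ (dualSet Φ (coordBox B κ)) = coordBox B κ := by
  rw [dualSet_coordBox hΦ hsymm, dualSet_coordBox hΦ hsymm,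
    LinearMap.BilinForm.dualBasis_dualBasis hΦ hsymm]
  simp only [CoordKind.dual_dual]

end DualSet

section GenNumLat

variable {V : Type*} [AddCommGroup V] [Module ℚ V]

lemma mem_span_sup_span_range_iff {ι κ : Type*} [Fintype ι] [Fintype κ] (b : ι → V) (c : κ → V)
    {x : V} :
    x ∈ span ℤ (range b) ⊔ (span ℚ (range c)).restrictScalars ℤ ↔
      ∃ (l : ι → ℤ) (m : κ → ℚ), x = (∑ i, (l i : ℚ) • b i) + ∑ j, m j • c j := by
  simp only [mem_sup, restrictScalars_mem, mem_span_range_iff_exists_fun, Int.cast_smul_eq_zsmul]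
  constructor
  · rintro ⟨_, ⟨l, rfl⟩, _, ⟨m, rfl⟩, rfl⟩
    exact ⟨l, m, rfl⟩
  · rintro ⟨l, m, rfl⟩
    exact ⟨_, ⟨l, rfl⟩, _, ⟨m, rfl⟩, rfl⟩

theorem isGenNumLat_iff {K : Set V} :
    IsGenNumLat K ↔ ∃ s t : Set V, s.Finite ∧ t.Finite ∧
      K = ↑(span ℤ s ⊔ (span ℚ t).restrictScalars ℤ) := by
  constructor
  · rintro ⟨n, k, b, c, rfl⟩
    exact ⟨range b, range c, finite_range b, finite_range c,
      ext fun x => (mem_span_sup_span_range_iff b c).symm⟩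
  · rintro ⟨s, t, hs, ht, rfl⟩
    obtain ⟨n, b, rfl⟩ := hs.fin_embedding
    obtain ⟨k, c, rfl⟩ := ht.fin_embedding
    exact ⟨n, k, b, c, ext fun x => mem_span_sup_span_range_iff b c⟩

lemma IsGenNumLat.zero_mem {K : Set V} (hK : IsGenNumLat K) : 0 ∈ K := by
  obtain ⟨s, t, -, -, rfl⟩ := isGenNumLat_iff.mp hK
  exact (span ℤ s ⊔ (span ℚ t).restrictScalars ℤ).zero_mem

lemma IsGenNumLat.add {K L : Set V} (hK : IsGenNumLat K) (hL : IsGenNumLat L) :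
    IsGenNumLat (K + L) := by
  obtain ⟨s, t, hs, ht, rfl⟩ := isGenNumLat_iff.mp hK
  obtain ⟨s', t', hs', ht', rfl⟩ := isGenNumLat_iff.mp hL
  refine isGenNumLat_iff.mpr ⟨s ∪ s', t ∪ t', hs.union hs', ht.union ht', ?_⟩
  simp only [coe_sup, span_union, coe_restrictScalars]
  exact add_add_add_comm _ _ _ _

lemma IsGenNumLat.image {V' : Type*} [AddCommGroup V'] [Module ℚ V'] {K : Set V}
    (hK : IsGenNumLat K) (f : V →ₗ[ℚ] V') : IsGenNumLat (f '' K) := by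
  obtain ⟨s, t, hs, ht, rfl⟩ := isGenNumLat_iff.mp hK
  refine isGenNumLat_iff.mpr ⟨f '' s, f '' t, hs.image f, ht.image f, ?_⟩
  rw [coe_sup, coe_sup, image_add, coe_restrictScalars, coe_restrictScalars, ← map_coe, map_span]
  congr 1
  exact (map_coe (f.restrictScalars ℤ) _).symm.trans (congrArg _ (map_span _ s))

lemma isGenNumLat_of_fg {W : Submodule ℚ V} (hW : W.FG) : IsGenNumLat (W : Set V) := by
  obtain ⟨t, rfl⟩ := hW
  exact isGenNumLat_iff.mpr ⟨∅, t, finite_empty, t.finite_toSet, by simp⟩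

lemma IsGenNumLat.univ_prod {V' : Type*} [AddCommGroup V'] [Module ℚ V'] [FiniteDimensional ℚ V]
    {K : Set V'} (hK : IsGenNumLat K) : IsGenNumLat (univ ×ˢ K : Set (V × V')) := by
  have hsplit : univ ×ˢ K = (LinearMap.range (LinearMap.inl ℚ V V') : Set (V × V')) +
      LinearMap.inr ℚ V V' '' K := by
    ext ⟨a, p⟩
    simp only [mem_prod, mem_univ, true_and, mem_add, SetLike.mem_coe, LinearMap.mem_range,
      mem_image, LinearMap.inl_apply, LinearMap.inr_apply]
    constructor
    · intro hp
      exact ⟨_, ⟨a, rfl⟩, _, ⟨p, hp, rfl⟩, by simp⟩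
    · rintro ⟨_, ⟨a', rfl⟩, _, ⟨p', hp', rfl⟩, h⟩
      simp only [Prod.mk_add_mk, add_zero, zero_add, Prod.mk.injEq] at h
      exact h.2 ▸ hp'
  rw [hsplit, LinearMap.range_eq_map]
  exact (isGenNumLat_of_fg (Module.Finite.fg_top.map _)).add (hK.image _)

theorem isGenNumLat_coordBox {ι : Type*} [Fintype ι] (B : Basis ι ℚ V) (κ : ι → CoordKind) :
    IsGenNumLat (coordBox B κ) := by
  classical
  refine isGenNumLat_iff.mpr ⟨range fun i => if κ i = .int then B i else 0,
    range fun i => if κ i = .free then B i else 0, finite_range _, finite_range _, ?_⟩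
  ext x
  rw [SetLike.mem_coe, mem_span_sup_span_range_iff, mem_coordBox_iff]
  constructor
  · rintro ⟨a, ha, rfl⟩
    -- `⌊a i⌋` recovers the integer at integral coordinates and is discarded at the others.
    refine ⟨fun i => ⌊a i⌋, a, ?_⟩
    rw [← Finset.sum_add_distrib]
    refine Finset.sum_congr rfl fun i _ => ?_
    have hai := ha i
    rcases hk : κ i <;> simp only [hk, CoordKind.carrier] at hai <;> simp
    · obtain ⟨z, hz⟩ := hai
      simp [← hz]
    · simp [mem_singleton_iff.mp hai]
  · rintro ⟨l, m, rfl⟩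
    refine ⟨fun i => (if κ i = .int then (l i : ℚ) else 0) + if κ i = .free then m i else 0,
      fun i => ?_, ?_⟩
    · rcases hk : κ i <;> simp [hk, CoordKind.carrier]
    · simp [add_smul, Finset.sum_add_distrib, ite_smul, smul_ite]

end GenNumLat

lemma Module.Basis.sumExtend_comp_inl {K V ι : Type*} [DivisionRing K] [AddCommGroup V]
    [Module K V] {v : ι → V}
    (hv : LinearIndependent K v) : Basis.sumExtend hv ∘ Sum.inl = v := by
  ext i
  simp [Basis.sumExtend]
  rfl

section Structure

variable {V : Type*} [AddCommGroup V] [Module ℚ V]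

lemma Submodule.FG.exists_linearIndependent_rat_span_eq {M : Submodule ℤ V} (hM : M.FG) :
    ∃ (n : ℕ) (v : Fin n → V), LinearIndependent ℚ v ∧ span ℤ (range v) = M := by
  have : IsAddTorsionFree V := .of_module_rat V
  have : Module.Finite ℤ M := Module.Finite.iff_fg.mpr hM
  let b := (Module.Free.chooseBasis ℤ M).reindex (Fintype.equivFin _)
  refine ⟨_, M.subtype ∘ b, ?_, ?_⟩
  · exact (LinearIndependent.iff_fractionRing ℤ ℚ).mp
      (b.linearIndependent.map' M.subtype M.ker_subtype)
  · rw [range_comp, ← map_span, b.span_eq, map_top, range_subtype]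

lemma exists_linearIndependent_mkQ_sup_eq {M : Submodule ℤ V} (hM : M.FG) (W : Submodule ℚ V) :
    ∃ (n : ℕ) (v : Fin n → V), LinearIndependent ℚ (W.mkQ ∘ v) ∧
      M ⊔ W.restrictScalars ℤ = span ℤ (range v) ⊔ W.restrictScalars ℤ := by
  let π : V →ₗ[ℤ] V ⧸ W := W.mkQ.restrictScalars ℤ
  obtain ⟨n, v', hv'ind, hv'span⟩ := (hM.map π).exists_linearIndependent_rat_span_eq
  have hlift : ∀ i, ∃ y ∈ M, π y = v' i := fun i =>
    mem_map.mp (hv'span ▸ subset_span (mem_range_self i))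
  choose v hvM hv using hlift
  have hπv : π ∘ v = v' := funext hv
  refine ⟨n, v, hπv ▸ hv'ind, ?_⟩
  have hker : LinearMap.ker π = W.restrictScalars ℤ := by simp [π]
  have hmap : map π (span ℤ (range v)) = map π M := by
    rw [map_span, ← range_comp, hπv, hv'span]
  -- both sides are the preimage under `π` of the same image
  rw [← hker, ← comap_map_eq, ← comap_map_eq, hmap]

lemma coe_span_sup_eq_coordBox {W : Submodule ℚ V} {ι₁ ι₂ ι₃ : Type*} [Fintype ι₁] [Fintype ι₂]
    [Fintype ι₃] (w : Basis ι₁ ℚ W) (v : ι₂ → V) (B : Basis ((ι₁ ⊕ ι₂) ⊕ ι₃) ℚ V)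
    (hB : B ∘ Sum.inl = Sum.elim (fun j => (w j : V)) v) :
    ((span ℤ (range v) ⊔ W.restrictScalars ℤ : Submodule ℤ V) : Set V) =
      coordBox B (Sum.elim (Sum.elim (fun _ => .free) fun _ => .int) fun _ => .zero) := by
  have hBw (j : ι₁) : B (.inl (.inl j)) = w j := congrFun hB (.inl j)
  have hBv (i : ι₂) : B (.inl (.inr i)) = v i := congrFun hB (.inr i)
  ext x
  simp only [SetLike.mem_coe, mem_sup, restrictScalars_mem, mem_coordBox_iff, Sum.forall,
    Sum.elim_inl, Sum.elim_inr, Fintype.sum_sum_type, hBw, hBv, CoordKind.carrier, mem_univ,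
    implies_true, true_and, mem_range, mem_singleton_iff]
  constructor
  · rintro ⟨y, hy, z, hz, rfl⟩
    obtain ⟨l, rfl⟩ := (mem_span_range_iff_exists_fun ℤ).mp hy
    refine ⟨Sum.elim (Sum.elim (w.repr ⟨z, hz⟩) fun i => l i) 0, ⟨fun i => ⟨l i, rfl⟩,
      fun _ => rfl⟩, ?_⟩
    have hz' : ∑ j, w.repr ⟨z, hz⟩ j • (w j : V) = z := by
      simpa only [coe_sum, coe_smul] using congrArg Subtype.val (w.sum_repr ⟨z, hz⟩)
    simp [hz', Int.cast_smul_eq_zsmul, add_comm]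
  · rintro ⟨a, ⟨hint, hzero⟩, rfl⟩
    choose l hl using hint
    refine ⟨∑ i, l i • v i, sum_mem fun i _ => zsmul_mem (subset_span (mem_range_self i)) _,
      ∑ j, a (.inl (.inl j)) • (w j : V), sum_mem fun j _ => W.smul_mem _ (w j).2, ?_⟩
    simp [hzero, ← hl, Int.cast_smul_eq_zsmul, add_comm]

theorem IsGenNumLat.exists_coordBox [FiniteDimensional ℚ V] {K : Set V} (hK : IsGenNumLat K) :
    ∃ (n : ℕ) (B : Basis (Fin n) ℚ V) (κ : Fin n → CoordKind), K = coordBox B κ := by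
  obtain ⟨s, t, hs, -, rfl⟩ := isGenNumLat_iff.mp hK
  obtain ⟨n, v, hv, hsup⟩ := exists_linearIndependent_mkQ_sup_eq (fg_span hs) (span ℚ t)
  let w := Module.finBasis ℚ (span ℚ t)
  have hwv := w.linearIndependent.sumElim_of_quotient v hv
  let B := Basis.sumExtend hwv
  have := Module.Finite.finite_basis B
  have : Finite (Basis.sumExtendIndex hwv) :=
    Finite.of_injective (Sum.inr (α := Fin (finrank ℚ (span ℚ t)) ⊕ Fin n)) Sum.inr_injective
  have := Fintype.ofFinite (Basis.sumExtendIndex hwv)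
  rw [hsup, coe_span_sup_eq_coordBox w v B (Basis.sumExtend_comp_inl hwv),
    ← coordBox_reindex B _ (Fintype.equivFin _)]
  exact ⟨_, _, _, rfl⟩

end Structure

section Duality

variable {V : Type*} [AddCommGroup V] [Module ℚ V] {Φ : LinearMap.BilinForm ℚ V}

lemma zero_mem_dualSet (K : Set V) : 0 ∈ dualSet Φ K :=
  fun f _ => ⟨0, by simp⟩

lemma dualSet_add {K L : Set V} (hK : 0 ∈ K) (hL : 0 ∈ L) :
    dualSet Φ (K + L) = dualSet Φ K ∩ dualSet Φ L := by
  ext g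
  constructor
  · intro hg
    exact ⟨fun f hf => hg _ ⟨f, hf, 0, hL, add_zero f⟩, fun f hf => hg _ ⟨0, hK, f, hf, zero_add f⟩⟩
  · rintro ⟨hgK, hgL⟩ _ ⟨f, hf, f', hf', rfl⟩
    obtain ⟨z, hz⟩ := hgK f hf
    obtain ⟨z', hz'⟩ := hgL f' hf'
    exact ⟨z + z', by rw [map_add, LinearMap.add_apply, hz, hz', Int.cast_add]⟩

variable [FiniteDimensional ℚ V]

theorem IsGenNumLat.isGenNumLat_dualSet (hΦ : Φ.Nondegenerate) (hsymm : Φ.IsSymm) {K : Set V}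
    (hK : IsGenNumLat K) : IsGenNumLat (dualSet Φ K) := by
  obtain ⟨n, B, κ, rfl⟩ := hK.exists_coordBox
  rw [dualSet_coordBox hΦ hsymm]
  exact isGenNumLat_coordBox _ _

theorem IsGenNumLat.dualSet_dualSet (hΦ : Φ.Nondegenerate) (hsymm : Φ.IsSymm) {K : Set V}
    (hK : IsGenNumLat K) : dualSet Φ (dualSet Φ K) = K := by
  obtain ⟨n, B, κ, rfl⟩ := hK.exists_coordBox
  exact dualSet_dualSet_coordBox hΦ hsymm B κ

theorem IsGenNumLat.dualSet_inter (hΦ : Φ.Nondegenerate) (hsymm : Φ.IsSymm) {K L : Set V}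
    (hK : IsGenNumLat K) (hL : IsGenNumLat L) :
    dualSet Φ (K ∩ L) = dualSet Φ K + dualSet Φ L := by
  have hKL : K ∩ L = dualSet Φ (dualSet Φ K + dualSet Φ L) := by
    rw [dualSet_add (zero_mem_dualSet K) (zero_mem_dualSet L), hK.dualSet_dualSet hΦ hsymm,
      hL.dualSet_dualSet hΦ hsymm]
  rw [hKL, ((hK.isGenNumLat_dualSet hΦ hsymm).add
    (hL.isGenNumLat_dualSet hΦ hsymm)).dualSet_dualSet hΦ hsymm]

end Duality

section GroundSet

variable {S P : Type*} [Fintype S] [Fintype P]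

/-- The standard pairing of `ℚ^(S ⊎ P)`, with vectors written as pairs. -/
def pairingSP : LinearMap.BilinForm ℚ ((S → ℚ) × (P → ℚ)) :=
  (dotProductBilin ℚ ℚ).compl₁₂ (LinearMap.fst ℚ _ _) (LinearMap.fst ℚ _ _) +
    (dotProductBilin ℚ ℚ).compl₁₂ (LinearMap.snd ℚ _ _) (LinearMap.snd ℚ _ _)

lemma pairingSP_apply (f g : (S → ℚ) × (P → ℚ)) :
    pairingSP f g = (∑ a, f.1 a * g.1 a) + ∑ b, f.2 b * g.2 b := rfl

lemma dualSet_pairingSP (K : Set ((S → ℚ) × (P → ℚ))) : dualSet pairingSP K = dualLat2 K := rfl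

lemma pairingSP_isSymm : (pairingSP : LinearMap.BilinForm ℚ ((S → ℚ) × (P → ℚ))).IsSymm :=
  ⟨fun f g => by simp [pairingSP_apply, mul_comm]⟩

lemma pairingSP_nondegenerate :
    (pairingSP : LinearMap.BilinForm ℚ ((S → ℚ) × (P → ℚ))).Nondegenerate := by
  refine (pairingSP.nondegenerate_iff (fun f => add_nonneg (dotProduct_star_self_nonneg f.1)
    (dotProduct_star_self_nonneg f.2)) (LinearMap.BilinForm.isSymm_iff.mp pairingSP_isSymm)).mpr
    fun f => ?_
  change f.1 ⬝ᵥ f.1 + f.2 ⬝ᵥ f.2 = 0 ↔ f = 0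
  rw [add_eq_zero_iff_of_nonneg (dotProduct_star_self_nonneg _) (dotProduct_star_self_nonneg _),
    dotProduct_self_eq_zero, dotProduct_self_eq_zero, Prod.ext_iff]
  rfl

/-- The matched composition `K_SP ↔ K_P`. -/
def matchedComp (KSP : Set ((S → ℚ) × (P → ℚ))) (KP : Set (P → ℚ)) : Set (S → ℚ) :=
  {fS | ∃ h ∈ KP, (fS, h) ∈ KSP}

lemma neg_mem_dualLat {X : Type*} [Fintype X] {K : Set (X → ℚ)} {g : X → ℚ}
    (hg : g ∈ dualLat K) : -g ∈ dualLat K := by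
  intro f hf
  obtain ⟨z, hz⟩ := hg f hf
  exact ⟨-z, by simp [← hz]⟩

lemma dualSet_univ_prod_subset {KP : Set (P → ℚ)} (h0 : 0 ∈ KP) :
    dualSet pairingSP (univ ×ˢ KP) ⊆ ({0} ×ˢ dualLat KP : Set ((S → ℚ) × (P → ℚ))) := by
  classical
  intro g hg
  refine ⟨funext fun s => eq_zero_of_forall_mul_eq_intCast fun q => ?_, fun f hf => ?_⟩
  · obtain ⟨z, hz⟩ := hg (q • Pi.single s 1, 0) ⟨trivial, h0⟩
    exact ⟨z, by simpa [pairingSP_apply, Pi.single_apply] using hz⟩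
  · obtain ⟨z, hz⟩ := hg (0, f) ⟨trivial, hf⟩
    exact ⟨z, by simpa [pairingSP_apply] using hz⟩

lemma matchedComp_dualLat_subset (KSP : Set ((S → ℚ) × (P → ℚ))) (KP : Set (P → ℚ)) :
    matchedComp (dualLat2 KSP) (dualLat KP) ⊆ dualLat (matchedComp KSP KP) := by
  rintro g ⟨h, hh, hgh⟩ f ⟨p, hp, hfp⟩
  obtain ⟨z, hz⟩ := hgh _ hfp
  obtain ⟨z', hz'⟩ := hh p hp
  exact ⟨z - z', by rw [Int.cast_sub, ← hz, ← hz']; ring⟩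

theorem dualLat_matchedComp {KSP : Set ((S → ℚ) × (P → ℚ))} {KP : Set (P → ℚ)}
    (hSP : IsGenNumLat KSP) (hP : IsGenNumLat KP) :
    dualLat (matchedComp KSP KP) = matchedComp (dualLat2 KSP) (dualLat KP) := by
  refine Subset.antisymm (fun g hg => ?_) (matchedComp_dualLat_subset KSP KP)
  have hg0 : (g, 0) ∈ dualSet pairingSP (KSP ∩ univ ×ˢ KP) := by
    rintro ⟨f, p⟩ ⟨hfp, -, hp⟩
    simpa [pairingSP_apply] using hg f ⟨p, hp, hfp⟩
  rw [hSP.dualSet_inter pairingSP_nondegenerate pairingSP_isSymm hP.univ_prod,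
    dualSet_pairingSP] at hg0
  obtain ⟨x, hx, y, hy, hxy⟩ := hg0
  obtain ⟨hy1, hy2⟩ := dualSet_univ_prod_subset hP.zero_mem hy
  have hx_eq : x = (g, -y.2) := by
    obtain ⟨hxy1, hxy2⟩ := Prod.ext_iff.mp hxy
    ext1
    · simpa [mem_singleton_iff.mp hy1] using hxy1
    · exact eq_neg_of_add_eq_zero_left hxy2
  exact ⟨-y.2, neg_mem_dualLat hy2, hx_eq ▸ hx⟩

lemma dualLat2_coe_submodule (V : Submodule ℚ ((S → ℚ) × (P → ℚ))) :
    dualLat2 (V : Set ((S → ℚ) × (P → ℚ))) =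
      {g | ∀ f ∈ V, (∑ a, f.1 a * g.1 a) + ∑ b, f.2 b * g.2 b = 0} := by
  ext g
  constructor
  · intro hg f hf
    refine eq_zero_of_forall_mul_eq_intCast fun q => ?_
    obtain ⟨z, hz⟩ := hg (q • f) (V.smul_mem q hf)
    exact ⟨z, by rw [← hz, ← pairingSP_apply, ← pairingSP_apply, map_smul, LinearMap.smul_apply,
      smul_eq_mul]⟩
  · intro hg f hf
    exact ⟨0, by rw [hg f hf, Int.cast_zero]⟩

end GroundSet

/-- Implicit duality for a single ground set: `(K_SP ↔ K_P)ᵈ = K_SPᵈ ↔ K_Pᵈ`,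
and for a vector space `V_SP`, `(V_SP ↔ K_P)ᵈ = V_SPᗮ ↔ K_Pᵈ`. -/
theorem stmt8 {S P : Type*} [Fintype S] [Fintype P]
    (KSP : Set ((S → ℚ) × (P → ℚ))) (KP : Set (P → ℚ))
    (h1 : IsGenNumLat KSP) (h2 : IsGenNumLat KP) :
    dualLat {fS | ∃ h ∈ KP, (fS, h) ∈ KSP} =
      {fS | ∃ h ∈ dualLat KP, (fS, h) ∈ dualLat2 KSP} ∧
    ∀ V : Submodule ℚ ((S → ℚ) × (P → ℚ)),
      dualLat {fS | ∃ h ∈ KP, (fS, h) ∈ V} =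
        {fS | ∃ h ∈ dualLat KP,
          ((fS, h) : (S → ℚ) × (P → ℚ)) ∈
            {g | ∀ f ∈ V, (∑ a, f.1 a * g.1 a) + ∑ b, f.2 b * g.2 b = 0}} := by
  refine ⟨dualLat_matchedComp h1 h2, fun V => ?_⟩
  rw [← dualLat2_coe_submodule V]
  exact dualLat_matchedComp (isGenNumLat_of_fg (IsNoetherian.noetherian V)) h2
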